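/- arXiv:2007.06332 — 4 statements merged into one kernel-verified Lean document; each statement's English description precedes it below -/
import Mathlib

section
/- Let k_p, k_d > 0 and let φ : ℝ → ℝ³ be a twice differentiable curve satisfying ‖φ(t)‖ = 1 and ⟨φ(t), φ̇(t)⟩ = 0 for all t, which solves the closed-loop regulation equation φ̈(t) + ‖φ̇(t)‖²·φ(t) = −k_p·(φ(t) × (φ(t) × e₃)) − k_d·φ̇(t). Then the Lyapunov function V₁(t) = k_p·(1 − ⟨φ(t), e₃⟩) + (1/2)·‖φ̇(t)‖² satisfies dV₁/dt = −k_d·‖φ̇(t)‖² for all t; in particular V₁ is nonincreasing. -/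
open scoped InnerProductSpace

noncomputable section

/-- ℝ³ with the Euclidean inner product and norm. -/
abbrev E3 := EuclideanSpace ℝ (Fin 3)

/-- The cross product on ℝ³. -/
def cross (a b : E3) : E3 :=
  WithLp.toLp 2 ![a 1 * b 2 - a 2 * b 1, a 2 * b 0 - a 0 * b 2, a 0 * b 1 - a 1 * b 0]

/-- The third standard basis vector e₃ = (0,0,1). -/
def e3 : E3 := WithLp.toLp 2 ![0, 0, 1]

/-!
Differentiating, `V̇₁ = -k_p ⟨φ̇, e₃⟩ + ⟨φ̇, φ̈⟩`. In `⟨φ̇, φ̈⟩` the centripetal term `‖φ̇‖² φ` of the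
equation drops out because `φ ⟂ φ̇`, and by `a × (a × b) = ⟨a, b⟩ a - ‖a‖² b` the feedback term gives
`⟨φ̇, φ × (φ × e₃)⟩ = -⟨φ̇, e₃⟩`, which cancels the potential part. What is left is `-k_d ‖φ̇‖² ≤ 0`.
-/

theorem cross_cross_self (a b : E3) : cross a (cross a b) = ⟪a, b⟫_ℝ • a - ⟪a, a⟫_ℝ • b := by
  ext i
  fin_cases i <;>
  · simp only [cross, PiLp.inner_apply, RCLike.inner_apply, conj_trivial, Fin.sum_univ_three,
      PiLp.sub_apply, PiLp.smul_apply, smul_eq_mul, PiLp.toLp_apply, Fin.isValue, Matrix.cons_val,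
      Matrix.cons_val_one, Matrix.cons_val_zero, Fin.zero_eta, Fin.mk_one, Fin.reduceFinMk]
    ring

theorem inner_cross_cross_self_of_norm_eq_one {a v : E3} (ha : ‖a‖ = 1) (hav : ⟪a, v⟫_ℝ = 0)
    (b : E3) : ⟪v, cross a (cross a b)⟫_ℝ = -⟪v, b⟫_ℝ := by
  rw [cross_cross_self, real_inner_self_eq_norm_sq, ha, inner_sub_right, inner_smul_right,
    inner_smul_right, real_inner_comm a v, hav]
  ring

/-- Pointwise form of the energy balance: `v` and `acc` stand for `φ̇(t)` and `φ̈(t)`. -/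
theorem inner_velocity_accel_of_regulation {kp kd : ℝ} {p v acc e : E3} (hp : ‖p‖ = 1)
    (hpv : ⟪p, v⟫_ℝ = 0) (h : acc + ‖v‖ ^ 2 • p = -(kp • cross p (cross p e)) - kd • v) :
    ⟪v, acc⟫_ℝ = kp * ⟪v, e⟫_ℝ - kd * ‖v‖ ^ 2 := by
  have hacc : acc = -(kp • cross p (cross p e)) - kd • v - ‖v‖ ^ 2 • p := eq_sub_of_add_eq h
  rw [hacc, inner_sub_right, inner_sub_right, inner_neg_right, inner_smul_right, inner_smul_right,
    inner_smul_right, inner_cross_cross_self_of_norm_eq_one hp hpv, real_inner_self_eq_norm_sq,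
    real_inner_comm p v, hpv]
  ring

theorem hasDerivAt_potential_add_kinetic {F : Type*} [NormedAddCommGroup F] [InnerProductSpace ℝ F]
    {φ ψ : ℝ → F} {v a : F} {t : ℝ} (kp : ℝ) (e : F) (hφ : HasDerivAt φ v t)
    (hψ : HasDerivAt ψ a t) :
    HasDerivAt (fun s => kp * (1 - ⟪φ s, e⟫_ℝ) + (1 / 2) * ‖ψ s‖ ^ 2)
      (-(kp * ⟪v, e⟫_ℝ) + ⟪ψ t, a⟫_ℝ) t := by
  have hpot := ((hφ.inner ℝ (hasDerivAt_const t e)).const_sub 1).const_mul kp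
  have hkin := hψ.norm_sq.const_mul (1 / 2)
  refine (hpot.add hkin).congr_deriv ?_
  rw [inner_zero_right]
  ring

theorem lyapunov_derivative_regulation_on_sphere_general
    (kp kd : ℝ) (hkd : 0 < kd)
    (φ : ℝ → E3)
    (hφ : Differentiable ℝ φ) (hφ' : Differentiable ℝ (deriv φ))
    (hsph : ∀ t, ‖φ t‖ = 1)
    (horth : ∀ t, ⟪φ t, deriv φ t⟫_ℝ = 0)
    (heqn : ∀ t, deriv (deriv φ) t + ‖deriv φ t‖ ^ 2 • φ t =
      -(kp • cross (φ t) (cross (φ t) e3)) - kd • deriv φ t) :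
    (∀ t, HasDerivAt (fun s => kp * (1 - ⟪φ s, e3⟫_ℝ) + (1 / 2) * ‖deriv φ s‖ ^ 2)
        (-(kd * ‖deriv φ t‖ ^ 2)) t) ∧
    (∀ s t, s ≤ t →
      kp * (1 - ⟪φ t, e3⟫_ℝ) + (1 / 2) * ‖deriv φ t‖ ^ 2 ≤
      kp * (1 - ⟪φ s, e3⟫_ℝ) + (1 / 2) * ‖deriv φ s‖ ^ 2) := by
  have hV : ∀ t, HasDerivAt (fun s => kp * (1 - ⟪φ s, e3⟫_ℝ) + (1 / 2) * ‖deriv φ s‖ ^ 2)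
      (-(kd * ‖deriv φ t‖ ^ 2)) t := by
    intro t
    have hpower := inner_velocity_accel_of_regulation (hsph t) (horth t) (heqn t)
    refine (hasDerivAt_potential_add_kinetic kp e3 (hφ t).hasDerivAt
      (hφ' t).hasDerivAt).congr_deriv ?_
    rw [hpower]
    ring
  have hV_nonpos : ∀ t, -(kd * ‖deriv φ t‖ ^ 2) ≤ 0 := fun t => neg_nonpos.mpr (by positivity)
  exact ⟨hV, fun s t hst => antitone_of_hasDerivAt_nonpos hV hV_nonpos hst⟩

/-- For a twice differentiable curve φ on the unit 2-sphere solving the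
closed-loop PD regulation equation
`φ̈ + ‖φ̇‖²φ = −k_p (φ × (φ × e₃)) − k_d φ̇`,
the Lyapunov function `V₁ = k_p (1 − ⟨φ, e₃⟩) + ½‖φ̇‖²` satisfies `V̇₁ = −k_d ‖φ̇‖²`;
in particular `V₁` is nonincreasing. -/
theorem lyapunov_derivative_regulation_on_sphere
    (kp kd : ℝ) (hkp : 0 < kp) (hkd : 0 < kd)
    (φ : ℝ → E3)
    (hφ : Differentiable ℝ φ) (hφ' : Differentiable ℝ (deriv φ))
    (hsph : ∀ t, ‖φ t‖ = 1)
    (horth : ∀ t, ⟪φ t, deriv φ t⟫_ℝ = 0)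
    (heqn : ∀ t, deriv (deriv φ) t + ‖deriv φ t‖ ^ 2 • φ t =
      -(kp • cross (φ t) (cross (φ t) e3)) - kd • deriv φ t) :
    (∀ t, HasDerivAt (fun s => kp * (1 - ⟪φ s, e3⟫_ℝ) + (1 / 2) * ‖deriv φ s‖ ^ 2)
        (-(kd * ‖deriv φ t‖ ^ 2)) t) ∧
    (∀ s t, s ≤ t →
      kp * (1 - ⟪φ t, e3⟫_ℝ) + (1 / 2) * ‖deriv φ t‖ ^ 2 ≤
      kp * (1 - ⟪φ s, e3⟫_ℝ) + (1 / 2) * ‖deriv φ s‖ ^ 2) :=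
  lyapunov_derivative_regulation_on_sphere_general kp kd hkd φ hφ hφ' hsph horth heqn
end
end

section
/- Let k_p, k_d > 0 and let φ : ℝ → ℝ³ be a twice differentiable curve, defined for all t ≥ 0, satisfying ‖φ(t)‖ = 1 and ⟨φ(t), φ̇(t)⟩ = 0 for all t, which solves φ̈(t) + ‖φ̇(t)‖²·φ(t) = −k_p·(φ(t) × (φ(t) × e₃)) − k_d·φ̇(t). If the initial energy satisfies k_p·(1 − ⟨φ(0), e₃⟩) + (1/2)·‖φ̇(0)‖² < 2·k_p, then φ(t) → e₃ and φ̇(t) → 0 as t → ∞; i.e., the equilibrium (e₃, 0) is asymptotically stable and its region of attraction contains the sublevel set {V₁ < 2k_p} of the energy V₁ = k_p(1 − ⟨φ, e₃⟩) + (1/2)‖φ̇‖². -/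
open scoped InnerProductSpace

noncomputable section

/-!
Along solutions the energy `V₁` decreases at rate `k_d ‖φ̇‖²`, so `V₁ < 2 k_p` keeps the height
`a = ⟨φ, e₃⟩` above some `m > -1` for all time. Everything then only involves the scalars `a`,
`b = ⟨φ̇, e₃⟩` and `n = ‖φ̇‖²`, with `b² ≤ n (1 - a²)` by Cauchy–Schwarz. A small cross term gives
the strict Lyapunov function `W = V₁ - ε b` with `V₁ / 2 ≤ W ≤ 3 V₁ / 2` and `Ẇ ≤ -c V₁`, where
`1 + a ≥ 1 + m > 0` is what makes the potential term dissipate. Grönwall then gives exponential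
decay of `V₁`, which controls both `‖φ - e₃‖² = 2 (1 - a)` and `‖φ̇‖²`.
-/

open Filter Topology

theorem cross_cross_eq_inner_smul_sub (a b c : E3) :
    cross a (cross b c) = ⟪a, c⟫_ℝ • b - ⟪a, b⟫_ℝ • c := by
  ext i
  fin_cases i <;> simp [cross, PiLp.inner_apply, Fin.sum_univ_three] <;> ring

theorem norm_e3 : ‖e3‖ = 1 := by
  simp [EuclideanSpace.norm_eq, e3, Fin.sum_univ_three]

theorem sq_inner_le_of_inner_eq_zero {F : Type*} [NormedAddCommGroup F] [InnerProductSpace ℝ F]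
    {x e v : F} (hx : ‖x‖ = 1) (he : ‖e‖ = 1) (hv : ⟪v, x⟫_ℝ = 0) :
    ⟪v, e⟫_ℝ ^ 2 ≤ ‖v‖ ^ 2 * (1 - ⟪x, e⟫_ℝ ^ 2) := by
  have h1 : ⟪v, e - ⟪x, e⟫_ℝ • x⟫_ℝ = ⟪v, e⟫_ℝ := by
    simp [inner_sub_right, real_inner_smul_right, hv]
  have h2 : ‖e - ⟪x, e⟫_ℝ • x‖ ^ 2 = 1 - ⟪x, e⟫_ℝ ^ 2 := by
    rw [norm_sub_sq_real, norm_smul, real_inner_smul_right, hx, he, real_inner_comm]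
    simp only [one_pow, Real.norm_eq_abs, mul_one, sq_abs]
    ring
  rw [← h1, ← h2, ← mul_pow, ← sq_abs]
  exact pow_le_pow_left₀ (abs_nonneg _) (abs_real_inner_le_norm _ _) 2

theorem le_mul_exp_of_hasDerivAt_le_mul {f f' : ℝ → ℝ} {K : ℝ}
    (hf : ∀ t, 0 ≤ t → HasDerivAt f (f' t) t) (bound : ∀ t, 0 ≤ t → f' t ≤ K * f t)
    {t : ℝ} (ht : 0 ≤ t) : f t ≤ f 0 * Real.exp (K * t) := by
  have := le_gronwallBound_of_liminf_deriv_right_le (δ := f 0) (ε := 0) (b := t)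
    (fun s hs => (hf s hs.1).continuousAt.continuousWithinAt)
    (fun s hs _ hr => (hf s hs.1).hasDerivWithinAt.liminf_right_slope_le hr) le_rfl
    (fun s hs => by simpa using bound s hs.1) t ⟨ht, le_rfl⟩
  simpa [gronwallBound_ε0] using this

/-- The energy `V₁ = k_p (1 - ⟨φ, e₃⟩) + ½ ‖φ̇‖²` in terms of `a = ⟨φ, e₃⟩` and `n = ‖φ̇‖²`. -/
def energy (kp a n : ℝ) : ℝ := kp * (1 - a) + 1 / 2 * n

section Pointwise

variable {kp kd ε m a b n : ℝ}

theorem two_mul_abs_le (hn : 0 ≤ n) (ha : a ≤ 1) (hb : b ^ 2 ≤ n * (1 - a ^ 2)) :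
    2 * |b| ≤ n + 2 * (1 - a) :=
  two_mul_le_add_of_sq_le_mul hn (by linarith) (by nlinarith [sq_abs b, sq_nonneg (1 - a)])

theorem mul_abs_le_half_energy (hε : 0 ≤ ε) (hεkp : ε ≤ kp / 2) (hε1 : ε ≤ 1 / 2)
    (hn : 0 ≤ n) (ha : a ≤ 1) (hb : b ^ 2 ≤ n * (1 - a ^ 2)) :
    ε * |b| ≤ energy kp a n / 2 := by
  have := two_mul_abs_le hn ha hb
  unfold energy
  nlinarith

/-- The right-hand side is the derivative of the strict Lyapunov function `V₁ - ε ⟨φ̇, e₃⟩`. -/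
theorem lyapunov_deriv_le (hkp : 0 < kp) (hε : 0 ≤ ε) (hεk : ε * (2 * kp + kd ^ 2) ≤ kd * kp)
    (hm : -1 ≤ m) (ham : m ≤ a) (hn : 0 ≤ n) (ha : a ≤ 1) (hb : b ^ 2 ≤ n * (1 - a ^ 2)) :
    -(kd * n) - ε * (-(n * a) - kp * (a ^ 2 - 1) - kd * b) ≤
      -(min kd (ε * (1 + m) / 2) * energy kp a n) := by
  have hq : 0 ≤ 1 - a ^ 2 := by nlinarith
  have amgm : 2 * (kp * kd * b) ≤ kd ^ 2 * n + kp ^ 2 * (1 - a ^ 2) :=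
    two_mul_le_add_of_sq_le_mul (by positivity) (by positivity) <| calc
      (kp * kd * b) ^ 2 = (kp * kd) ^ 2 * b ^ 2 := by ring
      _ ≤ (kp * kd) ^ 2 * (n * (1 - a ^ 2)) := by gcongr
      _ = kd ^ 2 * n * (kp ^ 2 * (1 - a ^ 2)) := by ring
  have hq' : (1 + m) * (1 - a) ≤ 1 - a ^ 2 := by nlinarith
  have key : -(kd * n) - ε * (-(n * a) - kp * (a ^ 2 - 1) - kd * b) ≤
      -(kd * (1 / 2 * n) + ε * (1 + m) / 2 * (kp * (1 - a))) := by
    rw [← mul_le_mul_iff_right₀ (show (0:ℝ) < 2 * kp by positivity)]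
    nlinarith [mul_le_mul_of_nonneg_left amgm hε, mul_le_mul_of_nonneg_right hεk hn,
      mul_le_mul_of_nonneg_left hq' (by positivity : 0 ≤ ε * kp ^ 2),
      mul_nonneg (mul_nonneg (mul_nonneg hkp.le hε) hn) (sub_nonneg.2 ha)]
  have h1 := min_le_left kd (ε * (1 + m) / 2)
  have h2 := min_le_right kd (ε * (1 + m) / 2)
  unfold energy
  nlinarith [mul_le_mul_of_nonneg_right h1 (by positivity : 0 ≤ 1 / 2 * n),
    mul_le_mul_of_nonneg_right h2 (by nlinarith : 0 ≤ kp * (1 - a))]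

end Pointwise

theorem HasDerivAt.energy {a n : ℝ → ℝ} {a' n' t : ℝ} (kp : ℝ) (ha : HasDerivAt a a' t)
    (hn : HasDerivAt n n' t) :
    HasDerivAt (fun s => energy kp (a s) (n s)) (-(kp * a') + 1 / 2 * n') t :=
  ((((hasDerivAt_const t 1).sub ha).const_mul kp).add (hn.const_mul (1 / 2))).congr_deriv
    (by ring)

theorem energy_nonneg {kp a n : ℝ} (hkp : 0 ≤ kp) (ha : a ≤ 1) (hn : 0 ≤ n) :
    0 ≤ energy kp a n := by
  unfold energy
  nlinarith

/-- The closed loop seen through `a = ⟨φ, e₃⟩`, `b = ⟨φ̇, e₃⟩` and `n = ‖φ̇‖²`. -/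
structure HeightDynamics (kp kd : ℝ) (a b n : ℝ → ℝ) : Prop where
  hasDerivAt_height : ∀ t, 0 ≤ t → HasDerivAt a (b t) t
  hasDerivAt_rate : ∀ t, 0 ≤ t → HasDerivAt b (-(n t * a t) - kp * (a t ^ 2 - 1) - kd * b t) t
  hasDerivAt_sqSpeed : ∀ t, 0 ≤ t → HasDerivAt n (2 * (kp * b t - kd * n t)) t
  sqSpeed_nonneg : ∀ t, 0 ≤ t → 0 ≤ n t
  height_le_one : ∀ t, 0 ≤ t → a t ≤ 1
  rate_sq_le : ∀ t, 0 ≤ t → b t ^ 2 ≤ n t * (1 - a t ^ 2)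

namespace HeightDynamics

variable {kp kd : ℝ} {a b n : ℝ → ℝ}

theorem hasDerivAt_energy (h : HeightDynamics kp kd a b n) {t : ℝ} (ht : 0 ≤ t) :
    HasDerivAt (fun s => energy kp (a s) (n s)) (-(kd * n t)) t :=
  ((h.hasDerivAt_height t ht).energy kp (h.hasDerivAt_sqSpeed t ht)).congr_deriv (by ring)

theorem energy_le (h : HeightDynamics kp kd a b n) (hkd : 0 ≤ kd) {t : ℝ} (ht : 0 ≤ t) :
    energy kp (a t) (n t) ≤ energy kp (a 0) (n 0) := by
  simpa using le_mul_exp_of_hasDerivAt_le_mul (K := 0) (fun s hs => h.hasDerivAt_energy hs)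
    (fun s hs => by simpa using mul_nonneg hkd (h.sqSpeed_nonneg s hs)) ht

theorem one_sub_energy_div_le (h : HeightDynamics kp kd a b n) (hkp : 0 < kp) (hkd : 0 ≤ kd)
    {t : ℝ} (ht : 0 ≤ t) : 1 - energy kp (a 0) (n 0) / kp ≤ a t := by
  have hV := h.energy_le hkd ht
  have hn := h.sqSpeed_nonneg t ht
  rw [sub_le_comm, le_div_iff₀ hkp]
  unfold energy at hV ⊢
  nlinarith

theorem exists_energy_le_exp (h : HeightDynamics kp kd a b n) (hkp : 0 < kp) (hkd : 0 < kd)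
    (h0 : energy kp (a 0) (n 0) < 2 * kp) :
    ∃ C l : ℝ, 0 < l ∧ ∀ t, 0 ≤ t → energy kp (a t) (n t) ≤ C * Real.exp (-(l * t)) := by
  set m := 1 - energy kp (a 0) (n 0) / kp
  have hm : -1 < m := by
    have : energy kp (a 0) (n 0) / kp < 2 := by rwa [div_lt_iff₀ hkp]
    linarith
  obtain ⟨ε, hε, hεkp, hε1, hεk⟩ :
      ∃ ε : ℝ, 0 < ε ∧ ε ≤ kp / 2 ∧ ε ≤ 1 / 2 ∧ ε * (2 * kp + kd ^ 2) ≤ kd * kp := by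
    refine ⟨min (min (kp / 2) (1 / 2)) (kd * kp / (2 * kp + kd ^ 2)), by positivity,
      (min_le_left _ _).trans (min_le_left _ _), (min_le_left _ _).trans (min_le_right _ _), ?_⟩
    rw [← le_div_iff₀ (by positivity)]
    exact min_le_right _ _
  set c := min kd (ε * (1 + m) / 2)
  have hc : 0 < c := lt_min hkd (by nlinarith)
  set W : ℝ → ℝ := fun t => energy kp (a t) (n t) - ε * b t
  have hW_bounds : ∀ t, 0 ≤ t →
      energy kp (a t) (n t) / 2 ≤ W t ∧ W t ≤ 3 / 2 * energy kp (a t) (n t) := by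
    intro t ht
    have := mul_abs_le_half_energy hε.le hεkp hε1 (h.sqSpeed_nonneg t ht) (h.height_le_one t ht)
      (h.rate_sq_le t ht)
    constructor <;> nlinarith [neg_abs_le (b t), le_abs_self (b t)]
  have hW_deriv : ∀ t, 0 ≤ t → HasDerivAt W
      (-(kd * n t) - ε * (-(n t * a t) - kp * (a t ^ 2 - 1) - kd * b t)) t :=
    fun t ht => (h.hasDerivAt_energy ht).sub ((h.hasDerivAt_rate t ht).const_mul ε)
  refine ⟨2 * W 0, 2 * c / 3, by positivity, fun t ht => ?_⟩
  have hdecay := le_mul_exp_of_hasDerivAt_le_mul (K := -(2 * c / 3)) hW_deriv (fun s hs => by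
    have hW' := lyapunov_deriv_le hkp hε.le hεk hm.le (h.one_sub_energy_div_le hkp hkd.le hs)
      (h.sqSpeed_nonneg s hs) (h.height_le_one s hs) (h.rate_sq_le s hs)
    nlinarith [(hW_bounds s hs).2]) ht
  calc energy kp (a t) (n t) ≤ 2 * W t := by linarith [(hW_bounds t ht).1]
    _ ≤ 2 * W 0 * Real.exp (-(2 * c / 3 * t)) := by rw [neg_mul] at hdecay; linarith

theorem tendsto_energy (h : HeightDynamics kp kd a b n) (hkp : 0 < kp) (hkd : 0 < kd)
    (h0 : energy kp (a 0) (n 0) < 2 * kp) :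
    Tendsto (fun t => energy kp (a t) (n t)) atTop (𝓝 0) := by
  obtain ⟨C, l, hl, hle⟩ := h.exists_energy_le_exp hkp hkd h0
  have hexp : Tendsto (fun t => C * Real.exp (-(l * t))) atTop (𝓝 0) := by
    simpa using (Real.tendsto_exp_neg_atTop_nhds_zero.comp
      (tendsto_id.const_mul_atTop hl)).const_mul C
  refine squeeze_zero' ?_ ?_ hexp
  · filter_upwards [eventually_ge_atTop 0] with t ht
    exact energy_nonneg hkp.le (h.height_le_one t ht) (h.sqSpeed_nonneg t ht)
  · filter_upwards [eventually_ge_atTop 0] with t ht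
    exact hle t ht

end HeightDynamics

section ClosedLoop

variable {kp kd : ℝ} {x v w : E3}

theorem accel_eq_of_closedLoop (hx : ‖x‖ = 1)
    (h : w + ‖v‖ ^ 2 • x = -(kp • cross x (cross x e3)) - kd • v) :
    w = -(‖v‖ ^ 2 • x) - kp • (⟪x, e3⟫_ℝ • x - e3) - kd • v := by
  rw [cross_cross_eq_inner_smul_sub, real_inner_self_eq_norm_sq, hx] at h
  rw [eq_sub_of_add_eq h]
  module

theorem inner_accel_e3_of_closedLoop (hx : ‖x‖ = 1)
    (h : w + ‖v‖ ^ 2 • x = -(kp • cross x (cross x e3)) - kd • v) :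
    ⟪w, e3⟫_ℝ = -(‖v‖ ^ 2 * ⟪x, e3⟫_ℝ) - kp * (⟪x, e3⟫_ℝ ^ 2 - 1) - kd * ⟪v, e3⟫_ℝ := by
  rw [accel_eq_of_closedLoop hx h]
  simp only [inner_sub_left, inner_neg_left, real_inner_smul_left, real_inner_self_eq_norm_sq,
    norm_e3]
  ring

theorem inner_vel_accel_of_closedLoop (hx : ‖x‖ = 1) (hxv : ⟪x, v⟫_ℝ = 0)
    (h : w + ‖v‖ ^ 2 • x = -(kp • cross x (cross x e3)) - kd • v) :
    ⟪v, w⟫_ℝ = kp * ⟪v, e3⟫_ℝ - kd * ‖v‖ ^ 2 := by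
  rw [accel_eq_of_closedLoop hx h]
  simp only [inner_sub_right, inner_neg_right, real_inner_smul_right, real_inner_comm x v, hxv,
    real_inner_self_eq_norm_sq]
  ring

end ClosedLoop

theorem heightDynamics_of_closedLoop {kp kd : ℝ} {φ : ℝ → E3}
    (hφ : Differentiable ℝ φ) (hφ' : Differentiable ℝ (deriv φ))
    (hsph : ∀ t, 0 ≤ t → ‖φ t‖ = 1)
    (horth : ∀ t, 0 ≤ t → ⟪φ t, deriv φ t⟫_ℝ = 0)
    (heqn : ∀ t, 0 ≤ t → deriv (deriv φ) t + ‖deriv φ t‖ ^ 2 • φ t =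
      -(kp • cross (φ t) (cross (φ t) e3)) - kd • deriv φ t) :
    HeightDynamics kp kd (fun t => ⟪φ t, e3⟫_ℝ) (fun t => ⟪deriv φ t, e3⟫_ℝ)
      (fun t => ‖deriv φ t‖ ^ 2) where
  hasDerivAt_height t _ := by
    simpa using (hφ t).hasDerivAt.inner ℝ (hasDerivAt_const t e3)
  hasDerivAt_rate t ht := by
    simpa [inner_accel_e3_of_closedLoop (hsph t ht) (heqn t ht)] using
      (hφ' t).hasDerivAt.inner ℝ (hasDerivAt_const t e3)
  hasDerivAt_sqSpeed t ht := by
    simpa [inner_vel_accel_of_closedLoop (hsph t ht) (horth t ht) (heqn t ht)] using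
      (hφ' t).hasDerivAt.norm_sq
  sqSpeed_nonneg t _ := sq_nonneg _
  height_le_one t ht := by
    simpa [hsph t ht, norm_e3] using real_inner_le_norm (φ t) e3
  rate_sq_le t ht := by
    simpa using sq_inner_le_of_inner_eq_zero (hsph t ht) norm_e3
      ((real_inner_comm _ _).trans (horth t ht))

theorem tendsto_of_norm_sub_sq_le {α F : Type*} [SeminormedAddCommGroup F] {l : Filter α}
    {f : α → F} {c : F} {g : α → ℝ} (hfg : ∀ᶠ x in l, ‖f x - c‖ ^ 2 ≤ g x)
    (hg : Tendsto g l (𝓝 0)) : Tendsto f l (𝓝 c) := by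
  rw [tendsto_iff_norm_sub_tendsto_zero]
  refine squeeze_zero' (Eventually.of_forall fun _ => norm_nonneg _)
    (hfg.mono fun x hx => (le_abs_self _).trans (Real.abs_le_sqrt hx)) ?_
  simpa using hg.sqrt

/-- For a twice differentiable curve φ on the unit 2-sphere, defined for
all t ≥ 0, solving the closed-loop PD regulation equation
`φ̈ + ‖φ̇‖²φ = −k_p (φ × (φ × e₃)) − k_d φ̇`,
if the initial energy `V₁(0) = k_p (1 − ⟨φ(0), e₃⟩) + ½‖φ̇(0)‖²` is below `2 k_p`, then
`φ(t) → e₃` and `φ̇(t) → 0` as `t → ∞`. -/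
theorem asymptotic_stability_regulation_on_sphere
    (kp kd : ℝ) (hkp : 0 < kp) (hkd : 0 < kd)
    (φ : ℝ → E3)
    (hφ : Differentiable ℝ φ) (hφ' : Differentiable ℝ (deriv φ))
    (hsph : ∀ t, 0 ≤ t → ‖φ t‖ = 1)
    (horth : ∀ t, 0 ≤ t → ⟪φ t, deriv φ t⟫_ℝ = 0)
    (heqn : ∀ t, 0 ≤ t → deriv (deriv φ) t + ‖deriv φ t‖ ^ 2 • φ t =
      -(kp • cross (φ t) (cross (φ t) e3)) - kd • deriv φ t)
    (hinit : kp * (1 - ⟪φ 0, e3⟫_ℝ) + (1 / 2) * ‖deriv φ 0‖ ^ 2 < 2 * kp) :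
    Filter.Tendsto φ Filter.atTop (nhds e3) ∧
    Filter.Tendsto (deriv φ) Filter.atTop (nhds 0) := by
  have hsys := heightDynamics_of_closedLoop hφ hφ' hsph horth heqn
  have hV := hsys.tendsto_energy hkp hkd hinit
  constructor
  · refine tendsto_of_norm_sub_sq_le ?_ (by simpa using hV.const_mul (2 / kp))
    filter_upwards [eventually_ge_atTop 0] with t ht
    rw [norm_sub_sq_real, hsph t ht, norm_e3]
    unfold energy
    field_simp
    nlinarith [sq_nonneg ‖deriv φ t‖]
  · refine tendsto_of_norm_sub_sq_le ?_ (by simpa using hV.const_mul 2)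
    filter_upwards [eventually_ge_atTop 0] with t ht
    have := mul_nonneg hkp.le (sub_nonneg.2 (hsys.height_le_one t ht))
    unfold energy
    simp only [sub_zero]
    linarith
end
end

section
/- Let k₁, k₂ > 0 and let φ, φ_d : ℝ → ℝ³ be twice differentiable curves satisfying ‖φ(t)‖ = ‖φ_d(t)‖ = 1, ⟨φ(t), φ̇(t)⟩ = 0, and ⟨φ_d(t), φ̇_d(t)⟩ = 0 for all t. Define the transported reference velocity τ(φ, φ_d)φ̇_d := (φ_d × φ̇_d) × φ, the velocity error v_e := φ̇ − (φ_d × φ̇_d) × φ, and the feedforward term FF := ⟨φ, φ_d × φ̇_d⟩·(φ × φ̇) + (φ_d × φ̈_d) × φ. If φ solves the closed-loop tracking equation φ̈ = −‖φ̇‖²·φ − k₁·(φ × (φ × φ_d)) − k₂·v_e + FF, then the tracking Lyapunov function V₂(t) = k₁·(1 − ⟨φ(t), φ_d(t)⟩) + (1/2)·‖v_e(t)‖² satisfies dV₂/dt = −k₂·‖v_e(t)‖² ≤ 0 for all t. -/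
/-!
Differentiating, `V̇₂ = -k₁ (⟪φ̇, φ_d⟫ + ⟪φ, φ̇_d⟫) + ⟪v_e, v̇_e⟫`, and with `ω = φ_d × φ̇_d`
the derivative of the transported velocity is `(φ_d × φ̈_d) × φ + ω × φ̇`, whose first term the
feedforward cancels. Of what remains of `v̇_e`, the centripetal term `-‖φ̇‖² φ` is normal to the
sphere while `v_e` is tangent; the potential term gives `k₁ ⟪v_e, φ_d⟫ = k₁ (⟪φ̇, φ_d⟫ + ⟪φ, φ̇_d⟫)`
because `φ_d × (φ_d × φ̇_d) = -φ̇_d`; the damping gives `-k₂ ‖v_e‖²`; and the gyroscopic term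
`⟪φ, ω⟫ (φ × φ̇) - ω × φ̇` is orthogonal to `v_e` by the Binet–Cauchy identity.
-/

open scoped InnerProductSpace

noncomputable section

open WithLp Matrix

namespace E3

lemma cross_def (a b : E3) : cross a b = toLp 2 (ofLp a ⨯₃ ofLp b) := rfl

lemma inner_def (a b : E3) : ⟪a, b⟫_ℝ = ofLp a ⬝ᵥ ofLp b := by
  rw [EuclideanSpace.inner_eq_star_dotProduct, star_trivial, dotProduct_comm]

lemma cross_self (a : E3) : cross a a = 0 := by
  rw [cross_def, _root_.cross_self]; rfl

lemma inner_cross_self (a b : E3) : ⟪b, cross a b⟫_ℝ = 0 := by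
  rw [inner_def, cross_def, ofLp_toLp, dot_cross_self]

lemma inner_cross_cyclic (a b c : E3) : ⟪cross a b, c⟫_ℝ = ⟪cross b c, a⟫_ℝ := by
  simp only [inner_def, cross_def]
  rw [dotProduct_comm, triple_product_permutation, dotProduct_comm]

lemma cross_cross (a b c : E3) : cross a (cross b c) = ⟪a, c⟫_ℝ • b - ⟪a, b⟫_ℝ • c := by
  simp only [inner_def, cross_def, cross_cross_eq_smul_sub_smul', dotProduct_comm b]
  rfl

lemma inner_cross_cross (a b c d : E3) :
    ⟪cross a b, cross c d⟫_ℝ = ⟪a, c⟫_ℝ * ⟪b, d⟫_ℝ - ⟪a, d⟫_ℝ * ⟪b, c⟫_ℝ := by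
  simp only [inner_def, cross_def, cross_dot_cross]

def crossL : E3 →L[ℝ] E3 →L[ℝ] E3 :=
  let L : E3 ≃ₗ[ℝ] (Fin 3 → ℝ) := WithLp.linearEquiv 2 ℝ (Fin 3 → ℝ)
  LinearMap.toContinuousLinearMap
    ((LinearMap.toContinuousLinearMap : (E3 →ₗ[ℝ] E3) ≃ₗ[ℝ] E3 →L[ℝ] E3).toLinearMap ∘ₗ
      (crossProduct.compl₁₂ L.toLinearMap L.toLinearMap).compr₂ L.symm.toLinearMap)

lemma cross_cross_of_inner_eq_zero {p u : E3} (hp : ‖p‖ = 1) (hpu : ⟪p, u⟫_ℝ = 0) :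
    cross p (cross p u) = -u := by
  rw [cross_cross, hpu, real_inner_self_eq_norm_sq, hp]
  simp

lemma inner_sub_cross_self (p v w : E3) : ⟪p, v - cross w p⟫_ℝ = ⟪p, v⟫_ℝ := by
  rw [inner_sub_right, inner_cross_self, sub_zero]

lemma inner_cross_cross_of_inner_eq_zero {p e : E3} (hp : ‖p‖ = 1) (hpe : ⟪p, e⟫_ℝ = 0) (d : E3) :
    ⟪e, cross p (cross p d)⟫_ℝ = -⟪e, d⟫_ℝ := by
  rw [cross_cross, inner_sub_right, inner_smul_right, inner_smul_right, real_inner_comm p e, hpe,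
    real_inner_self_eq_norm_sq, hp]
  ring

lemma inner_sub_cross_cross {d d' : E3} (hd : ‖d‖ = 1) (hdd' : ⟪d, d'⟫_ℝ = 0) (p v : E3) :
    ⟪v - cross (cross d d') p, d⟫_ℝ = ⟪v, d⟫_ℝ + ⟪p, d'⟫_ℝ := by
  rw [inner_sub_left, inner_cross_cyclic, inner_cross_cyclic, cross_cross_of_inner_eq_zero hd hdd',
    inner_neg_left, real_inner_comm d' p, sub_neg_eq_add]

lemma inner_sub_cross_smul_cross_sub_cross {p v : E3} (hp : ‖p‖ = 1) (hpv : ⟪p, v⟫_ℝ = 0)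
    (ω : E3) : ⟪v - cross ω p, ⟪p, ω⟫_ℝ • cross p v - cross ω v⟫_ℝ = 0 := by
  have hpp : ⟪p, p⟫_ℝ = 1 := by rw [real_inner_self_eq_norm_sq, hp, one_pow]
  simp only [inner_sub_left, inner_sub_right, inner_smul_right, inner_cross_self, inner_cross_cross,
    hpv, hpp]
  ring

end E3

theorem HasDerivAt.cross {f g : ℝ → E3} {f' g' : E3} {t : ℝ}
    (hf : HasDerivAt f f' t) (hg : HasDerivAt g g' t) :
    HasDerivAt (fun s => cross (f s) (g s)) (cross (f t) g' + cross f' (g t)) t :=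
  E3.crossL.hasDerivAt_of_bilinear (fun _ => hf) (fun _ => hg)

open E3

lemma inner_velocity_error_closed_loop {k₁ k₂ : ℝ} {p v d d' α a : E3} (hp : ‖p‖ = 1)
    (hd : ‖d‖ = 1) (hpv : ⟪p, v⟫_ℝ = 0) (hdd' : ⟪d, d'⟫_ℝ = 0)
    (ha : a = -(‖v‖ ^ 2 • p) - k₁ • cross p (cross p d) - k₂ • (v - cross (cross d d') p) +
      (⟪p, cross d d'⟫_ℝ • cross p v + cross α p)) :
    ⟪v - cross (cross d d') p, a - (cross (cross d d') v + cross α p)⟫_ℝ =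
      k₁ * (⟪v, d⟫_ℝ + ⟪p, d'⟫_ℝ) - k₂ * ‖v - cross (cross d d') p‖ ^ 2 := by
  set ω := cross d d'
  set e := v - cross ω p
  have hpe : ⟪p, e⟫_ℝ = 0 := by rw [inner_sub_cross_self, hpv]
  have hdecomp : a - (cross ω v + cross α p) =
      -(‖v‖ ^ 2 • p) - k₁ • cross p (cross p d) - k₂ • e + (⟪p, ω⟫_ℝ • cross p v - cross ω v) := by
    rw [ha]; abel
  rw [hdecomp, inner_add_right, inner_sub_right, inner_sub_right, inner_neg_right,
    inner_smul_right, inner_smul_right, inner_smul_right, real_inner_comm, hpe,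
    inner_cross_cross_of_inner_eq_zero hp hpe, inner_sub_cross_cross hd hdd', real_inner_self_eq_norm_sq,
    inner_sub_cross_smul_cross_sub_cross hp hpv]
  ring

theorem lyapunov_derivative_tracking_on_sphere_general
    (k₁ k₂ : ℝ) (hk₂ : 0 < k₂)
    (φ φd : ℝ → E3)
    (hφ : Differentiable ℝ φ) (hφ' : Differentiable ℝ (deriv φ))
    (hφd : Differentiable ℝ φd) (hφd' : Differentiable ℝ (deriv φd))
    (hsph : ∀ t, ‖φ t‖ = 1) (hsphd : ∀ t, ‖φd t‖ = 1)
    (horth : ∀ t, ⟪φ t, deriv φ t⟫_ℝ = 0)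
    (horthd : ∀ t, ⟪φd t, deriv φd t⟫_ℝ = 0)
    (ve : ℝ → E3)
    (hve : ∀ t, ve t = deriv φ t - cross (cross (φd t) (deriv φd t)) (φ t))
    (FF : ℝ → E3)
    (hFF : ∀ t, FF t = ⟪φ t, cross (φd t) (deriv φd t)⟫_ℝ • cross (φ t) (deriv φ t) +
      cross (cross (φd t) (deriv (deriv φd) t)) (φ t))
    (heqn : ∀ t, deriv (deriv φ) t =
      -(‖deriv φ t‖ ^ 2 • φ t) - k₁ • cross (φ t) (cross (φ t) (φd t)) -
        k₂ • ve t + FF t) :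
    ∀ t, HasDerivAt (fun s => k₁ * (1 - ⟪φ s, φd s⟫_ℝ) + (1 / 2) * ‖ve s‖ ^ 2)
        (-(k₂ * ‖ve t‖ ^ 2)) t ∧ -(k₂ * ‖ve t‖ ^ 2) ≤ 0 := by
  intro t
  refine ⟨?_, neg_nonpos.mpr (by positivity)⟩
  have hω : HasDerivAt (fun s => cross (φd s) (deriv φd s))
      (cross (φd t) (deriv (deriv φd) t)) t := by
    simpa only [E3.cross_self, add_zero] using (hφd t).hasDerivAt.cross (hφd' t).hasDerivAt
  have hve' : HasDerivAt ve (deriv (deriv φ) t -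
      (cross (cross (φd t) (deriv φd t)) (deriv φ t) +
        cross (cross (φd t) (deriv (deriv φd) t)) (φ t))) t := by
    rw [show ve = _ from funext hve]
    exact (hφ' t).hasDerivAt.sub (hω.cross (hφ t).hasDerivAt)
  have hV := (((hasDerivAt_const t (1 : ℝ)).sub ((hφ t).hasDerivAt.inner ℝ
    (hφd t).hasDerivAt)).const_mul k₁).add (hve'.norm_sq.const_mul (1 / 2))
  refine hV.congr_deriv ?_
  rw [hve t, inner_velocity_error_closed_loop (hsph t) (hsphd t) (horth t) (horthd t)
    (by rw [heqn t, hFF t, hve t])]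
  ring

/-- For curves φ, φ_d on the unit 2-sphere, with transported reference
velocity `τ(φ,φ_d)φ̇_d = (φ_d × φ̇_d) × φ`, velocity error `v_e = φ̇ − (φ_d × φ̇_d) × φ`
and feedforward `FF = ⟨φ, φ_d × φ̇_d⟩ (φ × φ̇) + (φ_d × φ̈_d) × φ`, if φ solves the
closed-loop tracking equation
`φ̈ = −‖φ̇‖²φ − k₁ (φ × (φ × φ_d)) − k₂ v_e + FF`,
then the tracking Lyapunov function `V₂ = k₁ (1 − ⟨φ, φ_d⟩) + ½‖v_e‖²` satisfies
`V̇₂ = −k₂‖v_e‖² ≤ 0`. -/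
theorem lyapunov_derivative_tracking_on_sphere
    (k₁ k₂ : ℝ) (hk₁ : 0 < k₁) (hk₂ : 0 < k₂)
    (φ φd : ℝ → E3)
    (hφ : Differentiable ℝ φ) (hφ' : Differentiable ℝ (deriv φ))
    (hφd : Differentiable ℝ φd) (hφd' : Differentiable ℝ (deriv φd))
    (hsph : ∀ t, ‖φ t‖ = 1) (hsphd : ∀ t, ‖φd t‖ = 1)
    (horth : ∀ t, ⟪φ t, deriv φ t⟫_ℝ = 0)
    (horthd : ∀ t, ⟪φd t, deriv φd t⟫_ℝ = 0)
    (ve : ℝ → E3)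
    (hve : ∀ t, ve t = deriv φ t - cross (cross (φd t) (deriv φd t)) (φ t))
    (FF : ℝ → E3)
    (hFF : ∀ t, FF t = ⟪φ t, cross (φd t) (deriv φd t)⟫_ℝ • cross (φ t) (deriv φ t) +
      cross (cross (φd t) (deriv (deriv φd) t)) (φ t))
    (heqn : ∀ t, deriv (deriv φ) t =
      -(‖deriv φ t‖ ^ 2 • φ t) - k₁ • cross (φ t) (cross (φ t) (φd t)) -
        k₂ • ve t + FF t) :
    ∀ t, HasDerivAt (fun s => k₁ * (1 - ⟪φ s, φd s⟫_ℝ) + (1 / 2) * ‖ve s‖ ^ 2)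
        (-(k₂ * ‖ve t‖ ^ 2)) t ∧ -(k₂ * ‖ve t‖ ^ 2) ≤ 0 :=
  lyapunov_derivative_tracking_on_sphere_general k₁ k₂ hk₂ φ φd hφ hφ' hφd hφd' hsph hsphd horth
    horthd ve hve FF hFF heqn
end
end

section
/- Let u : ℝ → ℝ³ be continuous and let y : ℝ → ℝ³ be a twice differentiable solution of the controlled pendulum equation ÿ(t) + ‖ẏ(t)‖²·y(t) = y(t) × (y(t) × u(t)) for all t. If ‖y(0)‖ = 1 and ⟨y(0), ẏ(0)⟩ = 0, then ‖y(t)‖ = 1 and ⟨y(t), ẏ(t)⟩ = 0 for all t; i.e., the controlled dynamics evolves on the unit 2-sphere. -/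
/-
Write g = ‖y‖² and h = ⟨y, ẏ⟩. Since the forcing is orthogonal to y, the equation of motion gives
g' = 2h and h' = ‖ẏ‖² + ⟨y, ÿ⟩ = -‖ẏ‖²(g - 1). Thus (g - 1, h) solves a linear ODE with continuous
coefficients and vanishes at t = 0, so by Grönwall's inequality (forwards and backwards in time)
it vanishes identically.
-/

open scoped InnerProductSpace

noncomputable section

open Set

theorem inner_cross_self (a b : E3) : ⟪a, cross a b⟫_ℝ = 0 := by
  simp only [cross, PiLp.inner_apply, RCLike.inner_apply, conj_trivial, Fin.sum_univ_three,
    Matrix.cons_val_zero, Matrix.cons_val_one, Matrix.head_cons, Matrix.cons_val_two,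
    Matrix.tail_cons]
  ring

section Gronwall

variable {E : Type*} [NormedAddCommGroup E] [NormedSpace ℝ E] {f f' : ℝ → E} {c : ℝ → ℝ}

theorem eqOn_zero_Icc_of_norm_deriv_le {a b : ℝ} (hc : ContinuousOn c (Icc a b))
    (hf : ∀ t, HasDerivAt f (f' t) t) (ha : f a = 0)
    (bound : ∀ t ∈ Icc a b, ‖f' t‖ ≤ c t * ‖f t‖) : ∀ t ∈ Icc a b, f t = 0 := by
  obtain ⟨K, hK⟩ := isCompact_Icc.bddAbove_image hc
  refine eq_zero_of_abs_deriv_le_mul_abs_self_of_eq_zero_right (K := K)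
    (fun t _ => (hf t).continuousAt.continuousWithinAt)
    (fun t _ => (hf t).hasDerivWithinAt) ha fun t ht => ?_
  have ht' : t ∈ Icc a b := Ico_subset_Icc_self ht
  exact (bound t ht').trans
    (mul_le_mul_of_nonneg_right (hK (mem_image_of_mem c ht')) (norm_nonneg _))

theorem eq_zero_of_norm_deriv_le {t₀ : ℝ} (hc : Continuous c)
    (hf : ∀ t, HasDerivAt f (f' t) t) (ht₀ : f t₀ = 0)
    (bound : ∀ t, ‖f' t‖ ≤ c t * ‖f t‖) (t : ℝ) : f t = 0 := by
  rcases le_total t₀ t with ht | ht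
  · exact eqOn_zero_Icc_of_norm_deriv_le hc.continuousOn hf ht₀ (fun s _ => bound s) t ⟨ht, le_rfl⟩
  · have hf_neg : ∀ s, HasDerivAt (fun s => f (-s)) (-f' (-s)) s := fun s => by
      simpa [Function.comp_def] using (hf (-s)).scomp s (hasDerivAt_neg s)
    simpa using eqOn_zero_Icc_of_norm_deriv_le (hc.comp continuous_neg).continuousOn hf_neg
      (by simpa using ht₀) (fun s _ => by simpa using bound (-s)) (-t) ⟨neg_le_neg ht, le_rfl⟩

end Gronwall

theorem norm_two_mul_snd_neg_mul_fst_le (a b k : ℝ) (hk : 0 ≤ k) :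
    ‖(2 * b, -(k * a))‖ ≤ (2 + k) * ‖(a, b)‖ := by
  have ha : |a| ≤ ‖(a, b)‖ := le_max_left _ _
  have hb : |b| ≤ ‖(a, b)‖ := le_max_right _ _
  simp only [Prod.norm_def, Real.norm_eq_abs, abs_mul, abs_neg, abs_two, abs_of_nonneg hk] at *
  refine max_le ?_ ?_ <;> nlinarith [abs_nonneg a, abs_nonneg b]

section SphereConstraint

variable {V : Type*} [NormedAddCommGroup V] [InnerProductSpace ℝ V]

def sphereDefect (y : ℝ → V) (t : ℝ) : ℝ × ℝ :=
  (‖y t‖ ^ 2 - 1, ⟪y t, deriv y t⟫_ℝ)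

variable {y F : ℝ → V}

theorem hasDerivAt_sphereDefect (hy : Differentiable ℝ y) (hy' : Differentiable ℝ (deriv y))
    (heqn : ∀ t, deriv (deriv y) t + ‖deriv y t‖ ^ 2 • y t = F t)
    (hF : ∀ t, ⟪y t, F t⟫_ℝ = 0) (t : ℝ) :
    HasDerivAt (sphereDefect y)
      (2 * ⟪y t, deriv y t⟫_ℝ, -(‖deriv y t‖ ^ 2 * (‖y t‖ ^ 2 - 1))) t := by
  refine ((hy t).hasDerivAt.norm_sq.sub_const 1).prodMk
    (((hy t).hasDerivAt.inner ℝ (hy' t).hasDerivAt).congr_deriv ?_)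
  rw [eq_sub_of_add_eq (heqn t), inner_sub_right, inner_smul_right, hF,
    real_inner_self_eq_norm_sq, real_inner_self_eq_norm_sq]
  ring

theorem sphere_invariant_of_tangential_forcing (hy : Differentiable ℝ y)
    (hy' : Differentiable ℝ (deriv y))
    (heqn : ∀ t, deriv (deriv y) t + ‖deriv y t‖ ^ 2 • y t = F t)
    (hF : ∀ t, ⟪y t, F t⟫_ℝ = 0) (h0 : ‖y 0‖ = 1) (h0' : ⟪y 0, deriv y 0⟫_ℝ = 0) (t : ℝ) :
    ‖y t‖ = 1 ∧ ⟪y t, deriv y t⟫_ℝ = 0 := by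
  have hdefect : sphereDefect y t = 0 :=
    eq_zero_of_norm_deriv_le (t₀ := 0) (c := fun t => 2 + ‖deriv y t‖ ^ 2)
      (continuous_const.add (hy'.continuous.norm.pow 2))
      (hasDerivAt_sphereDefect hy hy' heqn hF) (by simp [sphereDefect, h0, h0'])
      (fun _ => norm_two_mul_snd_neg_mul_fst_le _ _ _ (sq_nonneg _)) t
  obtain ⟨hnorm, hinner⟩ := Prod.ext_iff.mp hdefect
  exact ⟨(pow_eq_one_iff_of_nonneg (norm_nonneg _) two_ne_zero).mp (sub_eq_zero.mp hnorm), hinner⟩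

end SphereConstraint

theorem sphere_invariance_of_controlled_pendulum_general
    (u : ℝ → E3)
    (y : ℝ → E3)
    (hy : Differentiable ℝ y) (hy' : Differentiable ℝ (deriv y))
    (heqn : ∀ t, deriv (deriv y) t + ‖deriv y t‖ ^ 2 • y t =
      cross (y t) (cross (y t) (u t)))
    (h0 : ‖y 0‖ = 1) (h0' : ⟪y 0, deriv y 0⟫_ℝ = 0) :
    ∀ t, ‖y t‖ = 1 ∧ ⟪y t, deriv y t⟫_ℝ = 0 :=
  sphere_invariant_of_tangential_forcing hy hy' heqn (fun _ => inner_cross_self _ _) h0 h0'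

/-- For a continuous control u and a twice differentiable solution y of
the controlled pendulum equation `ÿ + ‖ẏ‖²y = y × (y × u)`, if `‖y(0)‖ = 1` and
`⟨y(0), ẏ(0)⟩ = 0`, then `‖y(t)‖ = 1` and `⟨y(t), ẏ(t)⟩ = 0` for all t: the
controlled dynamics evolves on the unit 2-sphere. -/
theorem sphere_invariance_of_controlled_pendulum
    (u : ℝ → E3) (hu : Continuous u)
    (y : ℝ → E3)
    (hy : Differentiable ℝ y) (hy' : Differentiable ℝ (deriv y))
    (heqn : ∀ t, deriv (deriv y) t + ‖deriv y t‖ ^ 2 • y t =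
      cross (y t) (cross (y t) (u t)))
    (h0 : ‖y 0‖ = 1) (h0' : ⟪y 0, deriv y 0⟫_ℝ = 0) :
    ∀ t, ‖y t‖ = 1 ∧ ⟪y t, deriv y t⟫_ℝ = 0 :=
  sphere_invariance_of_controlled_pendulum_general u y hy hy' heqn h0 h0'
end
end
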